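/- arXiv:2211.08216 — 4 statements merged into one kernel-verified Lean document; each statement's English description precedes it below -/
import Mathlib

section
/- Let W be a Coxeter group, J a subset of simple reflections, and u, v ∈ W^J. Then v ≤ u in Bruhat order if and only if v·w_{0J} ≤ u·w_{0J} in Bruhat order, where w_{0J} is the longest element of the (finite) parabolic subgroup W_J. -/
/- Common definitions: Bruhat order, parabolic subgroups, minimal coset representatives,
classical Coxeter matrices (0-based Bourbaki numbering: node `i` of the paper is `i - 1` here),
and effective good divisibility of a (Chow) ring with a family of cones of effective classes. -/

namespace MDSC

variable {B W : Type*}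

/-- The Bruhat order on a Coxeter group, via the subword criterion: `v ≤ u` iff some
reduced expression of `u` contains a substring which is a reduced expression of `v`. -/
def BruhatLE [Group W] {M : CoxeterMatrix B} (cs : CoxeterSystem M W) (v u : W) : Prop :=
  ∃ ω : List B, cs.IsReduced ω ∧ cs.wordProd ω = u ∧
    ∃ ω' : List B, ω'.Sublist ω ∧ cs.IsReduced ω' ∧ cs.wordProd ω' = v

/-- The standard parabolic subgroup `W_J = ⟨sᵢ : i ∈ J⟩`. -/
def ParabolicSubgroup [Group W] {M : CoxeterMatrix B} (cs : CoxeterSystem M W) (J : Set B) :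
    Subgroup W :=
  Subgroup.closure (cs.simple '' J)

/-- The set `W^J` of minimal length left coset representatives of `W_J`, i.e.
`{w : ℓ(w sᵢ) > ℓ(w) for all i ∈ J}`. -/
def MinCosetReps [Group W] {M : CoxeterMatrix B} (cs : CoxeterSystem M W) (J : Set B) : Set W :=
  {w : W | ∀ i ∈ J, cs.length w < cs.length (w * cs.simple i)}

/-- `w` is a longest element of the Coxeter group of `cs`. -/
def IsLongestElement [Group W] {M : CoxeterMatrix B} (cs : CoxeterSystem M W) (w : W) : Prop :=
  ∀ v : W, cs.length v ≤ cs.length w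

/-- Entries of the Coxeter matrix of type `Aₙ` (`n` nodes in a chain). -/
def typeAEntry (i j : ℕ) : ℕ :=
  if i = j then 1 else if i + 1 = j ∨ j + 1 = i then 3 else 2

/-- Entries of the Coxeter matrix of type `Bₙ = Cₙ` (the bond labelled `4` joins the last two
nodes `n - 2` and `n - 1`, i.e. the paper's nodes `n - 1` and `n`). -/
def typeBEntry (n i j : ℕ) : ℕ :=
  if i = j then 1
    else if (i = n - 1 ∧ j = n - 2) ∨ (j = n - 1 ∧ i = n - 2) then 4
    else if i + 1 = j ∨ j + 1 = i then 3 else 2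

/-- Entries of the Coxeter matrix of type `Dₙ` (Bourbaki numbering, 0-based: the fork nodes
`n - 2` and `n - 1` commute and are both joined to node `n - 3`). -/
def typeDEntry (n i j : ℕ) : ℕ :=
  if i = j then 1
    else if (i = n - 1 ∧ j = n - 3) ∨ (j = n - 1 ∧ i = n - 3) then 3
    else if (i + 1 = j ∨ j + 1 = i) ∧ i ≠ n - 1 ∧ j ≠ n - 1 then 3 else 2

/-- `M` is the Coxeter matrix of type `Aₙ`. -/
def IsTypeA (n : ℕ) (M : CoxeterMatrix (Fin n)) : Prop :=
  ∀ i j : Fin n, M i j = typeAEntry i j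

/-- `M` is the Coxeter matrix of type `Bₙ` (equivalently, of type `Cₙ`). -/
def IsTypeBC (n : ℕ) (M : CoxeterMatrix (Fin n)) : Prop :=
  ∀ i j : Fin n, M i j = typeBEntry n i j

/-- `M` is the Coxeter matrix of type `Dₙ`. -/
def IsTypeD (n : ℕ) (M : CoxeterMatrix (Fin n)) : Prop :=
  ∀ i j : Fin n, M i j = typeDEntry n i j

/-- Interpret a list of natural numbers as a word in `Fin n` (entries `≥ n` are discarded;
in all our uses every entry is `< n`). -/
def natsToFin (n : ℕ) (l : List ℕ) : List (Fin n) :=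
  l.filterMap fun i => if h : i < n then some ⟨i, h⟩ else none

/-- Effective good divisibility up to degree `s` for a ring `A` with distinguished cones
`Eff i` of effective classes of codimension `i`: two effective classes of codimensions
`i`, `j` with `i + j = s` and zero product cannot both be nonzero. -/
def EffGoodDivUpTo {A : Type*} [CommRing A] (Eff : ℕ → Set A) (s : ℕ) : Prop :=
  ∀ (i j : ℕ) (x y : A), i + j = s → x ∈ Eff i → y ∈ Eff j → x * y = 0 → x = 0 ∨ y = 0

/-- The effective good divisibility equals `e`: good divisibility holds up to every degree
`r ≤ e` and fails at degree `e + 1`. -/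
def IsEffGoodDivisibility {A : Type*} [CommRing A] (Eff : ℕ → Set A) (e : ℕ) : Prop :=
  (∀ r ≤ e, EffGoodDivUpTo Eff r) ∧ ¬EffGoodDivUpTo Eff (e + 1)

end MDSC

/-!
Tits' sign representation, in which `s i` acts on `W × ZMod 2` by conjugation and flips the sign
at `s i`, detects the right inversions of every `w` (`reflParity_eq_one_iff`). This gives the
strong exchange property, hence the deletion property, the agreement of the subword definition of
the Bruhat order with the order generated by `w t < w`, and the lifting property.

For `u ∈ W^J` and a reduced word `ρ` in the letters of `J`, a reduced word of `u` followed by `ρ`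
is still reduced, because `u` is the shortest element of `u W_J`. Appending `ρ` to a reduced word of
`u` and to its subword for `v` gives `v ≤ u → v x ≤ u x` for `x = π ρ`. Conversely, each letter of
`ρ`, read from the right, is a right descent of both sides, so the lifting property strips the
letters off one at a time.
-/

namespace CoxeterSystem

variable {B W : Type*} [Group W] {M : CoxeterMatrix B} (cs : CoxeterSystem M W)

local prefix:100 "s" => cs.simple
local prefix:100 "π" => cs.wordProd
local prefix:100 "ℓ" => cs.length
local prefix:100 "ris" => cs.rightInvSeq

open scoped Classical in
noncomputable def reflPerm (i : B) : Equiv.Perm (W × ZMod 2) :=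
  Function.Involutive.toPerm (fun p => (s i * p.1 * s i, p.2 + if p.1 = s i then 1 else 0)) <| by
    rintro ⟨x, ε⟩
    have hx : s i * x * s i = s i ↔ x = s i := by
      rw [mul_assoc, mul_eq_left, mul_eq_one_iff_eq_inv, inv_simple]
    ext
    · simp [mul_assoc]
    · by_cases h : x = s i <;> simp [hx, h, add_assoc, CharTwo.add_self_eq_zero]

open scoped Classical in
theorem reflPerm_apply (i : B) (x : W) (ε : ZMod 2) :
    cs.reflPerm i (x, ε) = (s i * x * s i, ε + if x = s i then 1 else 0) := rfl

theorem inv_pow_mul_simple_mul_pow_mul_pow (i j : B) (n e : ℕ) :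
    ((s i * s j) ^ n)⁻¹ * (s j * (s i * s j) ^ e) * (s i * s j) ^ n =
      s j * (s i * s j) ^ (2 * n + e) := by
  have h : s j * (s i * s j) * (s j)⁻¹ = (s i * s j)⁻¹ := by simp [mul_assoc]
  have hconj : s j * (s i * s j) ^ n * s j = ((s i * s j) ^ n)⁻¹ := by
    rw [← inv_pow, ← h, conj_pow, inv_simple]
  rw [← hconj]
  simp only [mul_assoc, simple_mul_simple_cancel_left, ← pow_add]
  ring_nf

open scoped Classical in
theorem reflPerm_mul_reflPerm_pow_apply (i j : B) (k : ℕ) (x : W) (ε : ZMod 2) :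
    ((cs.reflPerm i * cs.reflPerm j) ^ k) (x, ε) =
      ((s i * s j) ^ k * x * ((s i * s j) ^ k)⁻¹,
        ε + ∑ e ∈ Finset.range (2 * k), if x = s j * (s i * s j) ^ e then 1 else 0) := by
  induction k with
  | zero => simp
  | succ k ih =>
    have hconj (e : ℕ) : (s i * s j) ^ k * x * ((s i * s j) ^ k)⁻¹ = s j * (s i * s j) ^ e ↔
        x = s j * (s i * s j) ^ (2 * k + e) := by
      rw [← inv_pow_mul_simple_mul_pow_mul_pow]
      generalize s j * (s i * s j) ^ e = y
      constructor <;> rintro rfl <;> group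
    have h₀ : (s i * s j) ^ k * x * ((s i * s j) ^ k)⁻¹ = s j ↔
        x = s j * (s i * s j) ^ (2 * k) := by
      simpa using hconj 0
    have h₁ : s j * ((s i * s j) ^ k * x * ((s i * s j) ^ k)⁻¹) * s j = s i ↔
        x = s j * (s i * s j) ^ (2 * k + 1) := by
      rw [← hconj 1, pow_one]
      generalize (s i * s j) ^ k * x * ((s i * s j) ^ k)⁻¹ = y
      constructor <;> intro h
      · rw [← h]; simp [mul_assoc]
      · rw [h]; simp [mul_assoc]
    rw [pow_succ', Equiv.Perm.mul_apply, Equiv.Perm.mul_apply, ih, reflPerm_apply, reflPerm_apply]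
    ext
    · simp [pow_succ', mul_assoc]
    · simp only [h₀, h₁]
      rw [show 2 * (k + 1) = 2 * k + 1 + 1 by ring, Finset.sum_range_succ, Finset.sum_range_succ]
      ring

theorem isLiftable_reflPerm : M.IsLiftable cs.reflPerm := by
  intro i j
  ext ⟨x, ε⟩ : 1
  classical
  have hperiod (e : ℕ) : (s i * s j) ^ (M i j + e) = (s i * s j) ^ e := by
    rw [pow_add, simple_mul_simple_pow, one_mul]
  -- each reflection `s j * (s i * s j) ^ e` with `e < M i j` is counted twice
  rw [reflPerm_mul_reflPerm_pow_apply, simple_mul_simple_pow, two_mul, Finset.sum_range_add]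
  simp only [hperiod, CharTwo.add_self_eq_zero]
  simp

noncomputable def parityRep : W →* Equiv.Perm (W × ZMod 2) :=
  cs.lift ⟨cs.reflPerm, cs.isLiftable_reflPerm⟩

noncomputable def reflParity (w x : W) : ZMod 2 := (cs.parityRep w (x, 0)).2

theorem parityRep_simple (i : B) : cs.parityRep (s i) = cs.reflPerm i :=
  cs.lift_apply_simple cs.isLiftable_reflPerm i

theorem parityRep_apply (w x : W) (ε : ZMod 2) :
    cs.parityRep w (x, ε) = (w * x * w⁻¹, ε + cs.reflParity w x) := by
  induction w using cs.simple_induction_left generalizing x ε with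
  | one => simp [reflParity]
  | mul_simple_left w i ih =>
    classical
    have h : cs.reflParity (s i * w) x =
        cs.reflParity w x + if w * x * w⁻¹ = s i then 1 else 0 := by
      rw [reflParity, map_mul, Equiv.Perm.mul_apply, ih, parityRep_simple, reflPerm_apply, zero_add]
    rw [map_mul, Equiv.Perm.mul_apply, ih, parityRep_simple, reflPerm_apply, h]
    ext <;> simp [mul_assoc, add_assoc]

theorem reflParity_mul (a b x : W) :
    cs.reflParity (a * b) x = cs.reflParity b x + cs.reflParity a (b * x * b⁻¹) := by
  have h : cs.parityRep (a * b) (x, 0) = cs.parityRep a (cs.parityRep b (x, 0)) := by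
    rw [map_mul, Equiv.Perm.mul_apply]
  rw [parityRep_apply, parityRep_apply, parityRep_apply] at h
  simpa using congrArg Prod.snd h

theorem reflParity_one (x : W) : cs.reflParity 1 x = 0 := by
  simp [reflParity]

open scoped Classical in
theorem reflParity_simple (i : B) (x : W) :
    cs.reflParity (s i) x = if x = s i then 1 else 0 := by
  simp [reflParity, parityRep_simple, reflPerm_apply]

theorem reflParity_inv_conj (g x : W) : cs.reflParity g⁻¹ (g * x * g⁻¹) = cs.reflParity g x := by
  have h := cs.reflParity_mul g⁻¹ g x
  rw [inv_mul_cancel, reflParity_one] at h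
  exact (CharTwo.add_eq_zero.mp h.symm).symm

theorem reflParity_self {t : W} (ht : cs.IsReflection t) : cs.reflParity t t = 1 := by
  obtain ⟨g, i, rfl⟩ := ht
  have h₁ : g⁻¹ * (g * s i * g⁻¹) * g⁻¹⁻¹ = s i := by group
  have h₂ : s i * s i * (s i)⁻¹ = s i := by simp
  rw [reflParity_mul, h₁, reflParity_mul, h₂, reflParity_inv_conj, reflParity_simple, if_pos rfl,
    add_comm (1 : ZMod 2), CharTwo.add_cancel_left]

theorem reflParity_wordProd_eq_zero {ω : List B} {x : W} (hx : x ∉ ris ω) :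
    cs.reflParity (π ω) x = 0 := by
  induction ω with
  | nil => exact cs.reflParity_one x
  | cons i ω ih =>
    simp only [rightInvSeq, List.mem_cons, not_or] at hx
    have hne : π ω * x * (π ω)⁻¹ ≠ s i := by
      intro h
      exact hx.1 (by rw [← h]; group)
    rw [wordProd_cons, reflParity_mul, ih hx.2, reflParity_simple, if_neg hne, add_zero]

theorem isRightInversion_of_reflParity_eq_one {w t : W} (h : cs.reflParity w t = 1) :
    cs.IsRightInversion w t := by
  obtain ⟨ω, hω, rfl⟩ := cs.exists_isReduced w
  refine cs.isRightInversion_of_mem_rightInvSeq hω ?_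
  by_contra hmem
  rw [reflParity_wordProd_eq_zero cs hmem] at h
  exact zero_ne_one h

theorem reflParity_eq_one_iff {w t : W} (ht : cs.IsReflection t) :
    cs.reflParity w t = 1 ↔ cs.IsRightInversion w t := by
  refine ⟨cs.isRightInversion_of_reflParity_eq_one, fun hw => ?_⟩
  have hflip : cs.reflParity (w * t) t = 1 + cs.reflParity w t := by
    rw [reflParity_mul, reflParity_self cs ht, ht.mul_self, one_mul, ht.inv]
  by_contra hne
  have hwt : cs.IsRightInversion (w * t) t := by
    refine cs.isRightInversion_of_reflParity_eq_one ?_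
    rw [hflip]
    exact (by decide : ∀ a : ZMod 2, a ≠ 1 → 1 + a = 1) _ hne
  have hlt := hwt.2
  rw [mul_assoc, ht.mul_self, mul_one] at hlt
  exact absurd hw.2 (not_lt.2 hlt.le)

theorem mem_rightInvSeq_of_isRightInversion {ω : List B} {t : W}
    (ht : cs.IsRightInversion (π ω) t) : t ∈ ris ω := by
  by_contra hmem
  have := (cs.reflParity_eq_one_iff ht.1).2 ht
  rw [reflParity_wordProd_eq_zero cs hmem] at this
  exact zero_ne_one this

/-- The strong exchange property. -/
theorem exists_wordProd_eraseIdx_eq_mul {ω : List B} {t : W}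
    (ht : cs.IsRightInversion (π ω) t) : ∃ j < ω.length, π (ω.eraseIdx j) = π ω * t := by
  obtain ⟨j, hj, rfl⟩ := List.mem_iff_getElem.mp (cs.mem_rightInvSeq_of_isRightInversion ht)
  rw [length_rightInvSeq] at hj
  refine ⟨j, hj, ?_⟩
  rw [← wordProd_mul_getD_rightInvSeq, List.getD_eq_getElem]

theorem isRightInversion_simple_mul {w t : W} {i : B} (ht : cs.IsRightInversion w t)
    (hne : s i * w * t ≠ w) : cs.IsRightInversion (s i * w) t := by
  classical
  have hconj : w * t * w⁻¹ ≠ s i := by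
    intro h
    exact hne (by rw [← h, inv_mul_cancel_right, mul_assoc, ht.1.mul_self, mul_one])
  rw [← reflParity_eq_one_iff cs ht.1, reflParity_mul, (reflParity_eq_one_iff cs ht.1).2 ht,
    reflParity_simple, if_neg hconj, add_zero]

theorem isReduced_concat_iff {ω : List B} (hω : cs.IsReduced ω) (i : B) :
    cs.IsReduced (ω ++ [i]) ↔ ℓ (π ω) < ℓ (π ω * s i) := by
  have hω' : ℓ (π ω) = ω.length := hω
  rw [IsReduced, wordProd_append, wordProd_singleton, List.length_append, List.length_singleton]
  rcases cs.length_mul_simple (π ω) i with h | h <;> omega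

theorem isReduced_cons_iff {ω : List B} (hω : cs.IsReduced ω) (i : B) :
    cs.IsReduced (i :: ω) ↔ ℓ (π ω) < ℓ (s i * π ω) := by
  have hω' : ℓ (π ω) = ω.length := hω
  rw [IsReduced, wordProd_cons, List.length_cons]
  rcases cs.length_simple_mul (π ω) i with h | h <;> omega

variable {cs} in
theorem IsReduced.of_append_left {ω ω' : List B} (h : cs.IsReduced (ω ++ ω')) :
    cs.IsReduced ω := by
  simpa using h.take ω.length

variable {cs} in
theorem IsReduced.of_cons {i : B} {ω : List B} (h : cs.IsReduced (i :: ω)) : cs.IsReduced ω := by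
  simpa using h.drop 1

/-- The deletion property. -/
theorem exists_isReduced_sublist (ω : List B) :
    ∃ ω' : List B, ω'.Sublist ω ∧ cs.IsReduced ω' ∧ π ω' = π ω := by
  induction ω using List.reverseRecOn with
  | nil => exact ⟨[], .refl _, by simp [IsReduced], rfl⟩
  | append_singleton ω i ih =>
    obtain ⟨σ, hσω, hσ, hπ⟩ := ih
    have hπσ : π (ω ++ [i]) = π σ * s i := by rw [wordProd_append, wordProd_singleton, hπ]
    by_cases hasc : ℓ (π σ) < ℓ (π σ * s i)
    · exact ⟨σ ++ [i], hσω.append (.refl _), (cs.isReduced_concat_iff hσ i).2 hasc, by rw [hπσ,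
        wordProd_append, wordProd_singleton]⟩
    · have hdesc : ℓ (π σ * s i) + 1 = ℓ (π σ) := by
        rcases cs.length_mul_simple (π σ) i with h | h <;> omega
      obtain ⟨j, hj, hσj⟩ :=
        cs.exists_wordProd_eraseIdx_eq_mul (ω := σ) ⟨cs.isReflection_simple i, by omega⟩
      refine ⟨σ.eraseIdx j, ((σ.eraseIdx_sublist j).trans hσω).trans (List.sublist_append_left _ _),
        ?_, by rw [hσj, hπσ]⟩
      have := hσ.eq
      have := List.length_eraseIdx_add_one hj
      rw [IsReduced, hσj]
      omega

def BruhatStep (x y : W) : Prop := ∃ t, cs.IsRightInversion y t ∧ x = y * t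

def ChainLE : W → W → Prop := Relation.ReflTransGen cs.BruhatStep

theorem bruhatStep_mul_simple {w : W} {i : B} (h : ℓ (w * s i) < ℓ w) :
    cs.BruhatStep (w * s i) w :=
  ⟨s i, ⟨cs.isReflection_simple i, h⟩, rfl⟩

theorem bruhatStep_simple_mul {w : W} {i : B} (h : ℓ w < ℓ (s i * w)) :
    cs.BruhatStep w (s i * w) := by
  refine ⟨w⁻¹ * s i * w, ⟨?_, ?_⟩, by simp [mul_assoc]⟩
  · simpa using (cs.isReflection_simple i).conj w⁻¹
  · simpa [mul_assoc] using h

theorem BruhatStep.exists_sublist {x y : W} (h : cs.BruhatStep x y) {ω : List B}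
    (hωy : π ω = y) :
    ∃ ω' : List B, ω'.Sublist ω ∧ cs.IsReduced ω' ∧ π ω' = x := by
  obtain ⟨t, ht, rfl⟩ := h
  subst hωy
  obtain ⟨j, -, hj⟩ := cs.exists_wordProd_eraseIdx_eq_mul ht
  obtain ⟨ω', hω', hred, hπ⟩ := cs.exists_isReduced_sublist (ω.eraseIdx j)
  exact ⟨ω', hω'.trans (ω.eraseIdx_sublist j), hred, hπ.trans hj⟩

theorem ChainLE.exists_sublist {x y : W} (h : cs.ChainLE x y) {ω : List B}
    (hω : cs.IsReduced ω) (hωy : π ω = y) :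
    ∃ ω' : List B, ω'.Sublist ω ∧ cs.IsReduced ω' ∧ π ω' = x := by
  induction h using Relation.ReflTransGen.head_induction_on with
  | refl => exact ⟨ω, .refl ω, hω, hωy⟩
  | head hstep _ ih =>
    obtain ⟨σ, hσω, hσ, hσπ⟩ := ih
    obtain ⟨σ', hσ'σ, hσ', hσ'π⟩ := BruhatStep.exists_sublist cs hstep hσπ
    exact ⟨σ', hσ'σ.trans hσω, hσ', hσ'π⟩

/-- The larger of `w` and `s i * w`; the lifting property says that it is monotone in `w`. -/
noncomputable def simpleMulMax (i : B) (w : W) : W := if ℓ w < ℓ (s i * w) then s i * w else w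

theorem BruhatStep.chainLE_simpleMulMax {x y : W} (h : cs.BruhatStep x y) (i : B) :
    cs.ChainLE (cs.simpleMulMax i x) (cs.simpleMulMax i y) := by
  obtain ⟨t, ht, rfl⟩ := h
  have hstep : cs.BruhatStep (y * t) y := ⟨t, ht, rfl⟩
  have hlt := ht.2
  unfold simpleMulMax
  by_cases hy : ℓ y < ℓ (s i * y) <;> by_cases hx : ℓ (y * t) < ℓ (s i * (y * t)) <;>
    simp only [hy, hx, if_true, if_false]
  · refine .single ⟨t, ⟨ht.1, ?_⟩, by rw [mul_assoc]⟩
    rcases cs.length_simple_mul y i with h | h <;>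
      rcases cs.length_simple_mul (y * t) i with h' | h' <;> rw [mul_assoc] <;> omega
  · exact .tail (.single hstep) (cs.bruhatStep_simple_mul hy)
  · have hy' : ℓ (s i * y) < ℓ y := by
      rcases cs.length_simple_mul y i with h | h <;> omega
    -- `s i * (y * t)` lies below `s i * y`, unless it is `y` itself
    by_cases hne : s i * y * t = y
    · rw [← mul_assoc, hne]; exact .refl
    · refine .tail (.single ⟨t, cs.isRightInversion_simple_mul ht hne, by rw [mul_assoc]⟩) ?_
      simpa using cs.bruhatStep_simple_mul (w := s i * y) (i := i) (by simpa using hy')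
  · exact .single hstep

theorem ChainLE.simpleMulMax {x y : W} (h : cs.ChainLE x y) (i : B) :
    cs.ChainLE (cs.simpleMulMax i x) (cs.simpleMulMax i y) := by
  induction h with
  | refl => exact .refl
  | tail _ hstep ih => exact ih.trans (BruhatStep.chainLE_simpleMulMax cs hstep i)

theorem chainLE_of_sublist {ω ω' : List B} (hω : cs.IsReduced ω) (hω' : cs.IsReduced ω')
    (h : ω'.Sublist ω) : cs.ChainLE (π ω') (π ω) := by
  induction ω generalizing ω' with
  | nil => rw [List.sublist_nil.mp h]; exact .refl
  | cons i ω ih =>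
    have hωred := hω.of_cons
    have hasc := (cs.isReduced_cons_iff hωred i).1 hω
    rw [wordProd_cons]
    rcases List.sublist_cons_iff.mp h with h | ⟨σ, rfl, hσ⟩
    · exact .tail (ih hωred hω' h) (cs.bruhatStep_simple_mul hasc)
    · have hσred := hω'.of_cons
      have hσasc := (cs.isReduced_cons_iff hσred i).1 hω'
      have := (ih hωred hσred hσ).simpleMulMax cs i
      rwa [simpleMulMax, simpleMulMax, if_pos hσasc, if_pos hasc, ← wordProd_cons] at this

theorem bruhatLE_iff_chainLE {x y : W} : MDSC.BruhatLE cs x y ↔ cs.ChainLE x y := by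
  constructor
  · rintro ⟨ω, hω, rfl, ω', hω'ω, hω', rfl⟩
    exact cs.chainLE_of_sublist hω hω' hω'ω
  · intro h
    obtain ⟨ω, hω, rfl⟩ := cs.exists_isReduced y
    exact ⟨ω, hω, rfl, h.exists_sublist cs hω rfl⟩

theorem ChainLE.mul_simple {x y : W} (h : cs.ChainLE x y) {i : B} (hx : ℓ (x * s i) < ℓ x)
    (hy : ℓ (y * s i) < ℓ y) : cs.ChainLE (x * s i) (y * s i) := by
  obtain ⟨ρ, hρ, hρy⟩ := cs.exists_isReduced (y * s i)
  have hy' : π (ρ ++ [i]) = y := by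
    rw [wordProd_append, wordProd_singleton, ← hρy, simple_mul_simple_cancel_right]
  have hyred : cs.IsReduced (ρ ++ [i]) := by
    rw [isReduced_concat_iff cs hρ, ← hρy, simple_mul_simple_cancel_right]
    exact hy
  obtain ⟨σ, hσ, hσred, hσx⟩ := h.exists_sublist cs hyred hy'
  obtain ⟨σ₁, σ₂, rfl, hσ₁, hσ₂⟩ := List.sublist_append_iff.mp hσ
  have hσ₁red := hσred.of_append_left
  rw [hρy]
  rcases List.sublist_singleton.mp hσ₂ with rfl | rfl
  · rw [List.append_nil] at hσx
    exact .head (cs.bruhatStep_mul_simple hx) (hσx ▸ cs.chainLE_of_sublist hρ hσ₁red hσ₁)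
  · have hσ₁x : π σ₁ = x * s i := by
      rw [← hσx, wordProd_append, wordProd_singleton, simple_mul_simple_cancel_right]
    exact hσ₁x ▸ cs.chainLE_of_sublist hρ hσ₁red hσ₁

end CoxeterSystem

namespace MDSC

open CoxeterSystem

variable {B W : Type*} [Group W] {M : CoxeterMatrix B} (cs : CoxeterSystem M W) {J : Set B}

local prefix:100 "s" => cs.simple
local prefix:100 "π" => cs.wordProd
local prefix:100 "ℓ" => cs.length

theorem wordProd_mem_parabolicSubgroup {ρ : List B} (hρ : ∀ b ∈ ρ, b ∈ J) :
    π ρ ∈ ParabolicSubgroup cs J := by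
  rw [wordProd]
  refine list_prod_mem fun x hx => ?_
  obtain ⟨b, hb, rfl⟩ := List.mem_map.mp hx
  exact Subgroup.subset_closure ⟨b, hρ b hb, rfl⟩

theorem exists_isReduced_of_mem_parabolicSubgroup {x : W} (hx : x ∈ ParabolicSubgroup cs J) :
    ∃ ρ : List B, (∀ b ∈ ρ, b ∈ J) ∧ cs.IsReduced ρ ∧ π ρ = x := by
  obtain ⟨ρ, hρJ, rfl⟩ : ∃ ρ : List B, (∀ b ∈ ρ, b ∈ J) ∧ π ρ = x := by
    induction hx using Subgroup.closure_induction with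
    | mem x hx =>
      obtain ⟨b, hb, rfl⟩ := hx
      exact ⟨[b], by simpa using hb, cs.wordProd_singleton b⟩
    | one => exact ⟨[], by simp, cs.wordProd_nil⟩
    | mul x y _ _ ihx ihy =>
      obtain ⟨ρ₁, hρ₁, rfl⟩ := ihx
      obtain ⟨ρ₂, hρ₂, rfl⟩ := ihy
      exact ⟨ρ₁ ++ ρ₂, by simpa [or_imp, forall_and] using ⟨hρ₁, hρ₂⟩, cs.wordProd_append ρ₁ ρ₂⟩
    | inv x _ ih =>
      obtain ⟨ρ, hρ, rfl⟩ := ih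
      exact ⟨ρ.reverse, by simpa using hρ, cs.wordProd_reverse ρ⟩
  obtain ⟨ρ', hρ'ρ, hρ', hπ⟩ := cs.exists_isReduced_sublist ρ
  exact ⟨ρ', fun b hb => hρJ b (hρ'ρ.subset hb), hρ', hπ⟩

theorem exists_sublist_isReduced_append {ω ρ : List B}
    (hmin : ∀ y, (π ω)⁻¹ * y ∈ ParabolicSubgroup cs J → ℓ (π ω) ≤ ℓ y)
    (hω : cs.IsReduced ω) (hρ : ∀ b ∈ ρ, b ∈ J) :
    ∃ σ : List B, σ.Sublist ρ ∧ cs.IsReduced (ω ++ σ) ∧ π σ = π ρ := by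
  -- a reduced subword of `ω ++ ρ` with the same product keeps all of `ω`, by minimality
  obtain ⟨τ, hτ, hτred, hτπ⟩ := cs.exists_isReduced_sublist (ω ++ ρ)
  obtain ⟨α, β, rfl, hα, hβ⟩ := List.sublist_append_iff.mp hτ
  rw [wordProd_append, wordProd_append] at hτπ
  have hcoset : (π ω)⁻¹ * π α = π ρ * (π β)⁻¹ := by
    rw [eq_mul_inv_iff_mul_eq, mul_assoc, hτπ, inv_mul_cancel_left]
  have hαJ : (π ω)⁻¹ * π α ∈ ParabolicSubgroup cs J := by
    rw [hcoset]
    exact mul_mem (wordProd_mem_parabolicSubgroup cs hρ)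
      (inv_mem (wordProd_mem_parabolicSubgroup cs fun b hb => hρ b (hβ.subset hb)))
  have hαω : α = ω := by
    refine hα.eq_of_length (le_antisymm hα.length_le ?_)
    have := hmin _ hαJ
    rw [hτred.of_append_left.eq, hω.eq] at this
    omega
  subst hαω
  exact ⟨β, hβ, hτred, mul_left_cancel hτπ⟩

theorem length_le_of_mem_minCosetReps {u y : W} (hu : u ∈ MinCosetReps cs J)
    (hy : u⁻¹ * y ∈ ParabolicSubgroup cs J) : ℓ u ≤ ℓ y := by
  -- `u = π (ω ++ σ)` with `π ω` shortest in `u W_J` and `ω ++ σ` reduced; the last letter of a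
  -- nonempty `σ` would be a right descent of `u` in `J`
  obtain ⟨m, hm, hmin⟩ : ∃ m, u⁻¹ * m ∈ ParabolicSubgroup cs J ∧
      ∀ y, m⁻¹ * y ∈ ParabolicSubgroup cs J → ℓ m ≤ ℓ y := by
    obtain ⟨m, hm, hmin⟩ := (measure cs.length).wf.has_min
      {y | u⁻¹ * y ∈ ParabolicSubgroup cs J} ⟨u, by simp [one_mem]⟩
    refine ⟨m, hm, fun y hy => not_lt.1 (hmin y ?_)⟩
    simpa [mul_assoc] using mul_mem hm hy
  obtain ⟨ω, hω, rfl⟩ := cs.exists_isReduced m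
  obtain ⟨ρ, hρJ, -, hρ⟩ := exists_isReduced_of_mem_parabolicSubgroup cs
    (x := (π ω)⁻¹ * u) (by simpa using inv_mem hm)
  obtain ⟨σ, hσρ, hσ, hσπ⟩ := exists_sublist_isReduced_append cs hmin hω hρJ
  have hσu : π (ω ++ σ) = u := by rw [wordProd_append, hσπ, hρ, mul_inv_cancel_left]
  rcases List.eq_nil_or_concat' σ with rfl | ⟨σ', b, rfl⟩
  · rw [List.append_nil] at hσu
    subst hσu
    exact hmin y hy
  · rw [← List.append_assoc] at hσ hσu
    have hdesc := (cs.isReduced_concat_iff hσ.of_append_left b).1 hσ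
    rw [wordProd_append, wordProd_singleton] at hσu
    have hπ : π (ω ++ σ') = u * s b := by rw [← hσu, simple_mul_simple_cancel_right]
    rw [hπ, simple_mul_simple_cancel_right] at hdesc
    exact absurd (hu b (hρJ b (hσρ.subset (by simp)))) (not_lt.2 hdesc.le)

theorem isReduced_append_of_mem_minCosetReps {ω ρ : List B} (hu : π ω ∈ MinCosetReps cs J)
    (hω : cs.IsReduced ω) (hρJ : ∀ b ∈ ρ, b ∈ J) (hρ : cs.IsReduced ρ) :
    cs.IsReduced (ω ++ ρ) := by
  obtain ⟨σ, hσρ, hσ, hσπ⟩ :=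
    exists_sublist_isReduced_append cs (fun y => length_le_of_mem_minCosetReps cs hu) hω hρJ
  have hlen : ρ.length ≤ σ.length := by
    rw [← hρ.eq, ← hσπ]
    exact cs.length_wordProd_le σ
  rwa [← hσρ.eq_of_length (le_antisymm hσρ.length_le hlen)]

theorem length_mul_wordProd_lt_mul_simple {u : W} (hu : u ∈ MinCosetReps cs J) {ρ : List B}
    {b : B} (hρJ : ∀ c ∈ ρ ++ [b], c ∈ J) (hρ : cs.IsReduced (ρ ++ [b])) :
    ℓ (u * π ρ) < ℓ (u * π ρ * s b) := by
  obtain ⟨ω, hω, rfl⟩ := cs.exists_isReduced u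
  have h := isReduced_append_of_mem_minCosetReps cs hu hω hρJ hρ
  rw [← List.append_assoc] at h
  rw [← wordProd_append]
  exact (cs.isReduced_concat_iff h.of_append_left b).1 h

theorem bruhatLE_mul_of_mem_parabolicSubgroup {u v x : W} (hu : u ∈ MinCosetReps cs J)
    (hv : v ∈ MinCosetReps cs J) (hx : x ∈ ParabolicSubgroup cs J) (h : BruhatLE cs v u) :
    BruhatLE cs (v * x) (u * x) := by
  obtain ⟨ω, hω, rfl, ω', hω'ω, hω', rfl⟩ := h
  obtain ⟨ρ, hρJ, hρ, rfl⟩ := exists_isReduced_of_mem_parabolicSubgroup cs hx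
  exact ⟨ω ++ ρ, isReduced_append_of_mem_minCosetReps cs hu hω hρJ hρ, wordProd_append .., ω' ++ ρ,
    hω'ω.append (.refl ρ), isReduced_append_of_mem_minCosetReps cs hv hω' hρJ hρ,
    wordProd_append ..⟩

theorem chainLE_of_chainLE_mul {u v x : W} (hu : u ∈ MinCosetReps cs J)
    (hv : v ∈ MinCosetReps cs J) (hx : x ∈ ParabolicSubgroup cs J)
    (h : cs.ChainLE (v * x) (u * x)) : cs.ChainLE v u := by
  obtain ⟨ρ, hρJ, hρ, rfl⟩ := exists_isReduced_of_mem_parabolicSubgroup cs hx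
  clear hx
  induction ρ using List.reverseRecOn with
  | nil => simpa using h
  | append_singleton ρ b ih =>
    rw [wordProd_append, wordProd_singleton, ← mul_assoc, ← mul_assoc] at h
    have := h.mul_simple cs (i := b)
      (by simpa using length_mul_wordProd_lt_mul_simple cs hv hρJ hρ)
      (by simpa using length_mul_wordProd_lt_mul_simple cs hu hρJ hρ)
    simp only [simple_mul_simple_cancel_right] at this
    exact ih (fun c hc => hρJ c (List.mem_append_left _ hc)) hρ.of_append_left this

end MDSC

open MDSC

variable {B W : Type*}

theorem bruhat_le_iff_mul_longest_general [Group W] {M : CoxeterMatrix B} (cs : CoxeterSystem M W)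
    (J : Set B) (w0J : W)
    (hmem : w0J ∈ ParabolicSubgroup cs J)
    (u v : W) (hu : u ∈ MinCosetReps cs J) (hv : v ∈ MinCosetReps cs J) :
    BruhatLE cs v u ↔ BruhatLE cs (v * w0J) (u * w0J) := by
  refine ⟨bruhatLE_mul_of_mem_parabolicSubgroup cs hu hv hmem, fun h => ?_⟩
  rw [cs.bruhatLE_iff_chainLE] at h ⊢
  exact chainLE_of_chainLE_mul cs hu hv hmem h

/-- for `u, v ∈ W^J`, `v ≤ u` in Bruhat order iff `v w_{0J} ≤ u w_{0J}`,
where `w_{0J}` is the longest element of the (finite) parabolic subgroup `W_J`. -/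
theorem bruhat_le_iff_mul_longest [Group W] {M : CoxeterMatrix B} (cs : CoxeterSystem M W)
    (J : Set B) (w0J : W)
    (hmem : w0J ∈ ParabolicSubgroup cs J)
    (hmax : ∀ x ∈ ParabolicSubgroup cs J, cs.length x ≤ cs.length w0J)
    (u v : W) (hu : u ∈ MinCosetReps cs J) (hv : v ∈ MinCosetReps cs J) :
    BruhatLE cs v u ↔ BruhatLE cs (v * w0J) (u * w0J) :=
  bruhat_le_iff_mul_longest_general cs J w0J hmem u v hu hv
end

section
/- In the Weyl group of type B_n with simple reflections s_1,...,s_n, the expression s_1 s_2 ⋯ s_{n-1} s_n s_{n-1} ⋯ s_2 s_1 is reduced of length 2n−1, and every element of W^J for J = {2,...,n} has a reduced expression which is a right substring (suffix) of this expression. -/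
open MDSC

variable {B W : Type*}

/-- The word `s₁ s₂ ⋯ s_{n-1} sₙ s_{n-1} ⋯ s₂ s₁` in type `Bₙ`
(0-based: `0, 1, …, n-1, n-2, …, 1, 0`). -/
def ωB (n : ℕ) : List (Fin n) :=
  natsToFin n (List.range n ++ (List.range (n - 1)).reverse)

/-! Positions `0, …, 2n - 1` stand for `e₁, …, eₙ, -eₙ, …, -e₁`, and `sₐ` acts on them by the folded
transposition `a ↔ a + 1`, `2n - 2 - a ↔ 2n - 1 - a`. Each simple reflection moves a position by at
most one, while the product of `ωB n` moves `0` to `2n - 1`, so `ωB n` is reduced.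

Write `c k` for the product of the suffix of `ωB n` from position `k`. The braid relations show that
for every `k` and every simple reflection `sₐ`, either `sₐ c k = c (k ± 1)` or `sₐ c k = c k s_b`
with `b ≠ 0`. Removing a left descent keeps an element in `W^J`, so induction on the length puts
every element of `W^J` among the `c k`. -/

theorem mul_pow_eq_one_comm {G : Type*} [Group G] {x y : G} {m : ℕ} (h : (x * y) ^ m = 1) :
    (y * x) ^ m = 1 := by
  simpa [h, mul_assoc] using conj_pow (a := x⁻¹) (b := x * y) (i := m)

section MinCosetReps

variable [Group W] {M : CoxeterMatrix B} (cs : CoxeterSystem M W) {J : Set B}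

theorem simple_mul_mem_minCosetReps {x : W} {i : B} (hx : x ∈ MinCosetReps cs J)
    (hi : cs.IsLeftDescent x i) : cs.simple i * x ∈ MinCosetReps cs J := by
  intro j hj
  have hxj : cs.length (x * cs.simple j) ≤ 1 + cs.length (cs.simple i * x * cs.simple j) := by
    simpa [cs.length_simple, mul_assoc] using
      cs.length_mul_le (cs.simple i) (cs.simple i * x * cs.simple j)
  have := hx j hj
  have := cs.isLeftDescent_iff.mp hi
  omega

theorem minCosetReps_subset_of_simple_mul {C : Set W} (one_mem : 1 ∈ C)
    (simple_mul : ∀ c ∈ C, ∀ i, cs.simple i * c ∈ C ∨ ∃ j ∈ J, cs.simple i * c = c * cs.simple j) :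
    MinCosetReps cs J ⊆ C := by
  intro x hx
  induction hl : cs.length x using Nat.strong_induction_on generalizing x with
  | _ l ih =>
  obtain rfl | hne := eq_or_ne x 1
  · exact one_mem
  obtain ⟨i, hi⟩ := cs.exists_leftDescent_of_ne_one hne
  have hy := ih _ (hl ▸ hi) (simple_mul_mem_minCosetReps cs hx hi) rfl
  rcases simple_mul _ hy i with h | ⟨j, hj, hxj⟩
  · rwa [cs.simple_mul_simple_cancel_left] at h
  · rw [cs.simple_mul_simple_cancel_left] at hxj
    have hxs : x * cs.simple j = cs.simple i * x := by
      nth_rewrite 1 [hxj]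
      exact cs.simple_mul_simple_cancel_right j
    have := hx j hj
    rw [hxs] at this
    exact absurd this (lt_asymm hi)

end MinCosetReps

def foldedSwap (n a p : ℕ) : ℕ :=
  if p = a ∨ p = 2 * n - 2 - a then p + 1 else if p = a + 1 ∨ p = 2 * n - 1 - a then p - 1 else p

section FoldedSwap

variable {n a p : ℕ}

theorem foldedSwap_of_left (h : p = a ∨ p = 2 * n - 2 - a) : foldedSwap n a p = p + 1 :=
  if_pos h

theorem foldedSwap_of_right (h : ¬(p = a ∨ p = 2 * n - 2 - a))
    (h' : p = a + 1 ∨ p = 2 * n - 1 - a) : foldedSwap n a p = p - 1 := by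
  rw [foldedSwap, if_neg h, if_pos h']

theorem foldedSwap_of_not (h : ¬(p = a ∨ p = 2 * n - 2 - a))
    (h' : ¬(p = a + 1 ∨ p = 2 * n - 1 - a)) : foldedSwap n a p = p := by
  rw [foldedSwap, if_neg h, if_neg h']

theorem foldedSwap_le_succ : foldedSwap n a p ≤ p + 1 := by
  unfold foldedSwap
  split_ifs <;> omega

theorem foldedSwap_involutive (ha : a < n) : Function.Involutive (foldedSwap n a) := by
  intro p
  obtain rfl | rfl | rfl | rfl | hp : p = a ∨ p = a + 1 ∨ p = 2 * n - 2 - a ∨ p = 2 * n - 1 - a ∨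
      (p ≠ a ∧ p ≠ a + 1 ∧ p ≠ 2 * n - 2 - a ∧ p ≠ 2 * n - 1 - a) := by omega
  all_goals simp (disch := omega) only [foldedSwap_of_left, foldedSwap_of_right, foldedSwap_of_not]
  all_goals omega

end FoldedSwap

def foldedPerm (n : ℕ) (a : Fin n) : Equiv.Perm ℕ := (foldedSwap_involutive a.2).toPerm

section FoldedPerm

variable {n : ℕ} {a b : Fin n}

@[simp] theorem foldedPerm_apply (p : ℕ) : foldedPerm n a p = foldedSwap n a p := rfl

theorem foldedPerm_mul_self : foldedPerm n a * foldedPerm n a = 1 :=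
  Equiv.ext (foldedSwap_involutive a.2)

theorem foldedPerm_mul_pow_two (hab : (a : ℕ) + 2 ≤ b) :
    (foldedPerm n a * foldedPerm n b) ^ 2 = 1 := by
  obtain ⟨a, ha⟩ := a
  obtain ⟨b, hb⟩ := b
  ext p
  simp only [sq, Equiv.Perm.mul_apply, foldedPerm_apply, Equiv.Perm.one_apply] at hab ⊢
  -- Both factors fix every point not listed here; the same holds in the next two proofs.
  obtain rfl | rfl | rfl | rfl | rfl | rfl | rfl | rfl | hp :
      p = a ∨ p = a + 1 ∨ p = 2 * n - 2 - a ∨ p = 2 * n - 1 - a ∨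
      p = b ∨ p = b + 1 ∨ p = 2 * n - 2 - b ∨ p = 2 * n - 1 - b ∨
      (p ≠ a ∧ p ≠ a + 1 ∧ p ≠ 2 * n - 2 - a ∧ p ≠ 2 * n - 1 - a ∧
        p ≠ b ∧ p ≠ b + 1 ∧ p ≠ 2 * n - 2 - b ∧ p ≠ 2 * n - 1 - b) := by omega
  all_goals simp (disch := omega) only [foldedSwap_of_left, foldedSwap_of_right, foldedSwap_of_not]
  all_goals omega

theorem foldedPerm_mul_pow_three (hab : (b : ℕ) = a + 1) (hb : (b : ℕ) + 2 ≤ n) :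
    (foldedPerm n a * foldedPerm n b) ^ 3 = 1 := by
  obtain ⟨a, ha⟩ := a
  obtain ⟨b, hb⟩ := b
  ext p
  simp only [pow_succ, pow_zero, one_mul, Equiv.Perm.mul_apply, foldedPerm_apply,
    Equiv.Perm.one_apply] at hab hb ⊢
  subst hab
  obtain rfl | rfl | rfl | rfl | rfl | rfl | hp : p = a ∨ p = a + 1 ∨ p = a + 2 ∨
      p = 2 * n - 3 - a ∨ p = 2 * n - 2 - a ∨ p = 2 * n - 1 - a ∨
      (p ≠ a ∧ p ≠ a + 1 ∧ p ≠ a + 2 ∧ p ≠ 2 * n - 3 - a ∧ p ≠ 2 * n - 2 - a ∧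
        p ≠ 2 * n - 1 - a) := by omega
  all_goals simp (disch := omega) only [foldedSwap_of_left, foldedSwap_of_right, foldedSwap_of_not]
  all_goals omega

theorem foldedPerm_mul_pow_four (hn : 2 ≤ n) (ha : (a : ℕ) = n - 2) (hb : (b : ℕ) = n - 1) :
    (foldedPerm n a * foldedPerm n b) ^ 4 = 1 := by
  obtain ⟨a, ha'⟩ := a
  obtain ⟨b, hb'⟩ := b
  ext p
  simp only [pow_succ, pow_zero, one_mul, Equiv.Perm.mul_apply, foldedPerm_apply,
    Equiv.Perm.one_apply] at ha hb ⊢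
  subst ha hb
  obtain rfl | rfl | rfl | rfl | hp : p = n - 2 ∨ p = n - 1 ∨ p = n ∨ p = n + 1 ∨
      (p ≠ n - 2 ∧ p ≠ n - 1 ∧ p ≠ n ∧ p ≠ n + 1) := by omega
  all_goals simp (disch := omega) only [foldedSwap_of_left, foldedSwap_of_right, foldedSwap_of_not]
  all_goals omega

theorem isLiftable_foldedPerm {M : CoxeterMatrix (Fin n)} (hM : IsTypeBC n M) :
    M.IsLiftable (foldedPerm n) := by
  intro i j
  have := i.2
  have := j.2
  rw [hM]
  unfold typeBEntry
  split_ifs with hij h4 h3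
  · rw [pow_one, Fin.ext hij, foldedPerm_mul_self]
  · obtain ⟨hi, hj⟩ | ⟨hj, hi⟩ := h4
    · exact mul_pow_eq_one_comm (foldedPerm_mul_pow_four (by omega) hj hi)
    · exact foldedPerm_mul_pow_four (by omega) hi hj
  · obtain h | h := h3
    · exact foldedPerm_mul_pow_three h.symm (by omega)
    · exact mul_pow_eq_one_comm (foldedPerm_mul_pow_three h.symm (by omega))
  · obtain h | h : (i : ℕ) + 2 ≤ j ∨ (j : ℕ) + 2 ≤ i := by omega
    · exact foldedPerm_mul_pow_two h
    · exact mul_pow_eq_one_comm (foldedPerm_mul_pow_two h)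

end FoldedPerm

def typeBWordNat (n : ℕ) : List ℕ := List.range n ++ (List.range (n - 1)).reverse

theorem length_typeBWordNat (n : ℕ) : (typeBWordNat n).length = 2 * n - 1 := by
  simp only [typeBWordNat, List.length_append, List.length_range, List.length_reverse]
  omega

theorem getElem_typeBWordNat {n k : ℕ} (hk : k < (typeBWordNat n).length) :
    (typeBWordNat n)[k] = min k (2 * n - 2 - k) := by
  simp only [typeBWordNat, List.getElem_append, List.length_range, List.getElem_range,
    List.getElem_reverse]
  split_ifs <;> omega

theorem map_val_natsToFin {n : ℕ} {l : List ℕ} (h : ∀ a ∈ l, a < n) :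
    (natsToFin n l).map Fin.val = l := by
  induction l with
  | nil => rfl
  | cons a l ih => simp_all [natsToFin]

theorem map_val_ωB (n : ℕ) : (ωB n).map Fin.val = typeBWordNat n :=
  map_val_natsToFin (by simp only [List.mem_append, List.mem_range, List.mem_reverse]; omega)

theorem length_ωB (n : ℕ) : (ωB n).length = 2 * n - 1 := by
  rw [← List.length_map Fin.val, map_val_ωB, length_typeBWordNat]

namespace CoxeterSystem

variable {n : ℕ} [Group W] {M : CoxeterMatrix (Fin n)} (cs : CoxeterSystem M W)

def simpleOfNat (a : ℕ) : W := if h : a < n then cs.simple ⟨a, h⟩ else 1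

local prefix:100 "σ" => cs.simpleOfNat

theorem simpleOfNat_of_lt {a : ℕ} (h : a < n) : σ a = cs.simple ⟨a, h⟩ := dif_pos h

theorem simpleOfNat_of_le {a : ℕ} (h : n ≤ a) : σ a = 1 := dif_neg (by omega)

theorem simpleOfNat_val (i : Fin n) : σ i = cs.simple i := cs.simpleOfNat_of_lt i.2

theorem simpleOfNat_mul_self (a : ℕ) : σ a * σ a = 1 := by
  unfold simpleOfNat
  split_ifs
  exacts [cs.simple_mul_simple_self _, mul_one 1]

theorem wordProd_eq_prod_map_simpleOfNat (ω : List (Fin n)) :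
    cs.wordProd ω = ((ω.map Fin.val).map cs.simpleOfNat).prod := by
  simp [wordProd, Function.comp_def, simpleOfNat_val]

theorem wordProd_alternatingWord_typeBEntry (hM : IsTypeBC n M) {a b : ℕ} (ha : a < n)
    (hb : b < n) :
    cs.wordProd (alternatingWord ⟨a, ha⟩ ⟨b, hb⟩ (typeBEntry n a b)) =
      cs.wordProd (alternatingWord ⟨b, hb⟩ ⟨a, ha⟩ (typeBEntry n a b)) := by
  have := cs.wordProd_braidWord_eq ⟨a, ha⟩ ⟨b, hb⟩
  rwa [braidWord, braidWord, M.symmetric ⟨b, hb⟩, hM] at this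

theorem commute_simpleOfNat (hM : IsTypeBC n M) {a b : ℕ} (hab : a + 2 ≤ b) :
    Commute (σ a) (σ b) := by
  obtain hb | hb := lt_or_ge b n
  · have := cs.wordProd_alternatingWord_typeBEntry hM (a := a) (by omega) hb
    rw [show typeBEntry n a b = 2 by unfold typeBEntry; split_ifs <;> omega] at this
    rw [cs.simpleOfNat_of_lt (by omega), cs.simpleOfNat_of_lt hb]
    unfold Commute SemiconjBy
    simpa [alternatingWord, wordProd_cons] using this
  · rw [cs.simpleOfNat_of_le hb]
    exact Commute.one_right _

theorem simpleOfNat_braid (hM : IsTypeBC n M) {a : ℕ} (ha : a + 3 ≤ n) :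
    σ a * σ (a + 1) * σ a = σ (a + 1) * σ a * σ (a + 1) := by
  have := cs.wordProd_alternatingWord_typeBEntry hM (a := a) (b := a + 1) (by omega) (by omega)
  rw [show typeBEntry n a (a + 1) = 3 by unfold typeBEntry; split_ifs <;> omega] at this
  rw [cs.simpleOfNat_of_lt (by omega), cs.simpleOfNat_of_lt (by omega)]
  simpa [alternatingWord, wordProd_cons, mul_assoc] using this.symm

theorem simpleOfNat_braid_last (hM : IsTypeBC n M) (hn : 2 ≤ n) :
    σ (n - 2) * σ (n - 1) * σ (n - 2) * σ (n - 1) =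
      σ (n - 1) * σ (n - 2) * σ (n - 1) * σ (n - 2) := by
  have := cs.wordProd_alternatingWord_typeBEntry hM (a := n - 2) (b := n - 1) (by omega)
    (by omega)
  rw [show typeBEntry n (n - 2) (n - 1) = 4 by unfold typeBEntry; split_ifs <;> omega] at this
  rw [cs.simpleOfNat_of_lt (by omega), cs.simpleOfNat_of_lt (by omega)]
  simpa [alternatingWord, wordProd_cons, mul_assoc] using this

def ωBSuffixProd (k : ℕ) : W := cs.wordProd ((ωB n).drop k)

theorem ωBSuffixProd_eq (k : ℕ) :
    cs.ωBSuffixProd k = (((typeBWordNat n).drop k).map cs.simpleOfNat).prod := by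
  rw [ωBSuffixProd, wordProd_eq_prod_map_simpleOfNat, List.map_drop, map_val_ωB]

theorem ωBSuffixProd_of_le {k : ℕ} (hk : 2 * n - 1 ≤ k) : cs.ωBSuffixProd k = 1 := by
  rw [ωBSuffixProd, List.drop_of_length_le (by rw [length_ωB]; exact hk), wordProd_nil]

theorem ωBSuffixProd_eq_mul {k : ℕ} (hk : k < 2 * n - 1) :
    cs.ωBSuffixProd k = σ (min k (2 * n - 2 - k)) * cs.ωBSuffixProd (k + 1) := by
  rw [ωBSuffixProd_eq, ωBSuffixProd_eq,
    List.drop_eq_getElem_cons (by rw [length_typeBWordNat]; exact hk), List.map_cons,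
    List.prod_cons, getElem_typeBWordNat]

theorem commute_simpleOfNat_ωBSuffixProd_of_sub_lt (hM : IsTypeBC n M) {a k : ℕ} (ha : a < n)
    (h : 2 * n - 1 - k < a) : Commute (σ a) (cs.ωBSuffixProd k) := by
  induction hj : 2 * n - 1 - k generalizing k with
  | zero =>
    rw [cs.ωBSuffixProd_of_le (by omega)]
    exact Commute.one_right _
  | succ j ih =>
    rw [cs.ωBSuffixProd_eq_mul (by omega)]
    exact (cs.commute_simpleOfNat hM (by omega)).symm.mul_right (ih (by omega) (by omega))

theorem simpleOfNat_mul_ωBSuffixProd_of_add_two_le (hM : IsTypeBC n M) {a k : ℕ}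
    (h₁ : a + 2 ≤ k) (h₂ : a + 2 ≤ 2 * n - 1 - k) :
    σ a * cs.ωBSuffixProd k = cs.ωBSuffixProd k * σ (a + 1) := by
  induction hj : 2 * n - 1 - k generalizing k with
  | zero => omega
  | succ j ih =>
    rw [cs.ωBSuffixProd_eq_mul (by omega)]
    obtain hlt | heq : a + 2 ≤ min k (2 * n - 2 - k) ∨ min k (2 * n - 2 - k) = a + 1 := by omega
    · rw [← mul_assoc, (cs.commute_simpleOfNat hM hlt).eq, mul_assoc,
        ih (by omega) (by omega) (by omega), mul_assoc]
    rw [heq, cs.ωBSuffixProd_eq_mul (k := k + 1) (by omega),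
      show min (k + 1) (2 * n - 2 - (k + 1)) = a by omega]
    have hc := cs.commute_simpleOfNat_ωBSuffixProd_of_sub_lt hM (a := a + 1) (k := k + 2)
      (by omega) (by omega)
    calc σ a * (σ (a + 1) * (σ a * cs.ωBSuffixProd (k + 2)))
        = σ a * σ (a + 1) * σ a * cs.ωBSuffixProd (k + 2) := by simp only [mul_assoc]
      _ = σ (a + 1) * σ a * (σ (a + 1) * cs.ωBSuffixProd (k + 2)) := by
          rw [cs.simpleOfNat_braid hM (by omega), mul_assoc]
      _ = _ := by rw [hc.eq]; simp only [mul_assoc]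

theorem commute_simpleOfNat_ωBSuffixProd_of_lt (hM : IsTypeBC n M) {a k : ℕ} (ha : a < n)
    (h : k < a) : Commute (σ a) (cs.ωBSuffixProd k) := by
  induction hj : a - k generalizing k with
  | zero => omega
  | succ j ih =>
    rw [cs.ωBSuffixProd_eq_mul (by omega), show min k (2 * n - 2 - k) = k by omega]
    obtain hlt | rfl : k + 2 ≤ a ∨ a = k + 1 := by omega
    · exact (cs.commute_simpleOfNat hM hlt).symm.mul_right (ih (by omega) (by omega))
    rw [cs.ωBSuffixProd_eq_mul (k := k + 1) (by omega),
      show min (k + 1) (2 * n - 2 - (k + 1)) = k + 1 by omega]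
    show σ (k + 1) * _ = _ * σ (k + 1)
    obtain hk | rfl : k + 3 ≤ n ∨ k = n - 2 := by omega
    · have hlow := cs.simpleOfNat_mul_ωBSuffixProd_of_add_two_le hM (a := k) (k := k + 2)
        (by omega) (by omega)
      calc σ (k + 1) * (σ k * (σ (k + 1) * cs.ωBSuffixProd (k + 2)))
          = σ (k + 1) * σ k * σ (k + 1) * cs.ωBSuffixProd (k + 2) := by simp only [mul_assoc]
        _ = σ k * σ (k + 1) * (σ k * cs.ωBSuffixProd (k + 2)) := by
            rw [← cs.simpleOfNat_braid hM (by omega), mul_assoc]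
        _ = _ := by rw [hlow]; simp only [mul_assoc]
    rw [show n - 2 + 1 = n - 1 by omega, show n - 1 + 1 = n by omega,
      cs.ωBSuffixProd_eq_mul (k := n) (by omega), show min n (2 * n - 2 - n) = n - 2 by omega]
    have hc := cs.commute_simpleOfNat_ωBSuffixProd_of_sub_lt hM (a := n - 1) (k := n + 1)
      (by omega) (by omega)
    calc σ (n - 1) * (σ (n - 2) * (σ (n - 1) * (σ (n - 2) * cs.ωBSuffixProd (n + 1))))
        = σ (n - 1) * σ (n - 2) * σ (n - 1) * σ (n - 2) * cs.ωBSuffixProd (n + 1) := by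
          simp only [mul_assoc]
      _ = σ (n - 2) * σ (n - 1) * σ (n - 2) * (σ (n - 1) * cs.ωBSuffixProd (n + 1)) := by
          rw [← cs.simpleOfNat_braid_last hM (by omega), mul_assoc]
      _ = _ := by rw [hc.eq]; simp only [mul_assoc]

theorem simple_mul_ωBSuffixProd (hM : IsTypeBC n M) (i : Fin n) {k : ℕ} (hk : k ≤ 2 * n - 1) :
    cs.simple i * cs.ωBSuffixProd k ∈ cs.ωBSuffixProd '' Set.Iic (2 * n - 1) ∨
      ∃ j : Fin n, (j : ℕ) ≠ 0 ∧
        cs.simple i * cs.ωBSuffixProd k = cs.ωBSuffixProd k * cs.simple j := by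
  obtain ⟨a, ha⟩ := i
  rw [← cs.simpleOfNat_of_lt ha]
  obtain hlow | hhigh | hprev | hnext : (a + 2 ≤ k ∧ a + 2 ≤ 2 * n - 1 - k) ∨
      min k (2 * n - 1 - k) < a ∨ (0 < k ∧ a = min (k - 1) (2 * n - 1 - k)) ∨
      (k < 2 * n - 1 ∧ a = min k (2 * n - 2 - k)) := by omega
  · refine Or.inr ⟨⟨a + 1, by omega⟩, Nat.succ_ne_zero a, ?_⟩
    rw [← cs.simpleOfNat_of_lt]
    exact cs.simpleOfNat_mul_ωBSuffixProd_of_add_two_le hM hlow.1 hlow.2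
  · refine Or.inr ⟨⟨a, ha⟩, show a ≠ 0 by omega, ?_⟩
    rw [← cs.simpleOfNat_of_lt]
    obtain h | h : 2 * n - 1 - k < a ∨ k < a := by omega
    exacts [(cs.commute_simpleOfNat_ωBSuffixProd_of_sub_lt hM ha h).eq,
      (cs.commute_simpleOfNat_ωBSuffixProd_of_lt hM ha h).eq]
  · refine Or.inl ⟨k - 1, Set.mem_Iic.mpr (by omega), ?_⟩
    rw [cs.ωBSuffixProd_eq_mul (by omega), Nat.sub_add_cancel hprev.1, hprev.2]
    congr 2
    omega
  · refine Or.inl ⟨k + 1, Set.mem_Iic.mpr (by omega), ?_⟩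
    rw [cs.ωBSuffixProd_eq_mul hnext.1, ← hnext.2, ← mul_assoc, simpleOfNat_mul_self, one_mul]

def foldedRep (hM : IsTypeBC n M) : W →* Equiv.Perm ℕ :=
  cs.lift ⟨foldedPerm n, isLiftable_foldedPerm hM⟩

theorem foldedRep_simple (hM : IsTypeBC n M) (i : Fin n) :
    cs.foldedRep hM (cs.simple i) = foldedPerm n i :=
  cs.lift_apply_simple _ i

theorem foldedRep_wordProd_le (hM : IsTypeBC n M) (ω : List (Fin n)) (p : ℕ) :
    cs.foldedRep hM (cs.wordProd ω) p ≤ p + ω.length := by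
  induction ω with
  | nil => simp
  | cons i ω ih =>
    rw [wordProd_cons, map_mul, Equiv.Perm.mul_apply, foldedRep_simple, foldedPerm_apply,
      List.length_cons]
    exact foldedSwap_le_succ.trans (by omega)

theorem foldedRep_le_add_length (hM : IsTypeBC n M) (w : W) (p : ℕ) :
    cs.foldedRep hM w p ≤ p + cs.length w := by
  obtain ⟨ω, hω, rfl⟩ := cs.exists_isReduced w
  rw [hω.eq]
  exact cs.foldedRep_wordProd_le hM ω p

theorem foldedRep_ωBSuffixProd (hM : IsTypeBC n M) {k : ℕ} (hk : k ≤ 2 * n - 1) :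
    cs.foldedRep hM (cs.ωBSuffixProd k) 0 = 2 * n - 1 - k := by
  induction hj : 2 * n - 1 - k generalizing k with
  | zero => simp [cs.ωBSuffixProd_of_le (show 2 * n - 1 ≤ k by omega)]
  | succ j ih =>
    rw [cs.ωBSuffixProd_eq_mul (by omega), map_mul, Equiv.Perm.mul_apply,
      ih (by omega) (by omega), cs.simpleOfNat_of_lt (by omega), foldedRep_simple,
      foldedPerm_apply, foldedSwap_of_left (by dsimp only; omega)]

theorem isReduced_ωB (hM : IsTypeBC n M) : cs.IsReduced (ωB n) := by
  have hlow := cs.foldedRep_le_add_length hM (cs.ωBSuffixProd 0) 0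
  rw [cs.foldedRep_ωBSuffixProd hM (by omega), ωBSuffixProd, List.drop_zero] at hlow
  have hup := cs.length_wordProd_le (ωB n)
  rw [IsReduced, length_ωB]
  rw [length_ωB] at hup
  omega

end CoxeterSystem

theorem typeB_w0J_suffixes_general (n : ℕ)
    {W : Type*} [Group W] {M : CoxeterMatrix (Fin n)} (hM : IsTypeBC n M)
    (cs : CoxeterSystem M W) :
    cs.IsReduced (ωB n) ∧ (ωB n).length = 2 * n - 1 ∧
    ∀ x ∈ MinCosetReps cs {i : Fin n | (i : ℕ) ≠ 0},
      ∃ k : ℕ, cs.IsReduced ((ωB n).drop k) ∧ cs.wordProd ((ωB n).drop k) = x := by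
  have hred := cs.isReduced_ωB hM
  have hsub : MinCosetReps cs {i : Fin n | (i : ℕ) ≠ 0} ⊆
      cs.ωBSuffixProd '' Set.Iic (2 * n - 1) :=
    minCosetReps_subset_of_simple_mul cs
      ⟨2 * n - 1, Set.mem_Iic.mpr le_rfl, cs.ωBSuffixProd_of_le le_rfl⟩
      fun _ ⟨k, hk, hc⟩ i => hc ▸ cs.simple_mul_ωBSuffixProd hM i hk
  refine ⟨hred, length_ωB n, fun x hx => ?_⟩
  obtain ⟨k, -, rfl⟩ := hsub hx
  exact ⟨k, hred.drop k, rfl⟩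

/-- in type `Bₙ`, the expression `s₁ s₂ ⋯ s_{n-1} sₙ s_{n-1} ⋯ s₂ s₁` is reduced
of length `2n - 1`, and every element of `W^J`, `J = {2, …, n}` (0-based: complement of node
`0`), has a reduced expression which is a suffix of it. -/
theorem typeB_w0J_suffixes (n : ℕ) (hn : 2 ≤ n)
    {W : Type*} [Group W] {M : CoxeterMatrix (Fin n)} (hM : IsTypeBC n M)
    (cs : CoxeterSystem M W) :
    cs.IsReduced (ωB n) ∧ (ωB n).length = 2 * n - 1 ∧
    ∀ x ∈ MinCosetReps cs {i : Fin n | (i : ℕ) ≠ 0},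
      ∃ k : ℕ, cs.IsReduced ((ωB n).drop k) ∧ cs.wordProd ((ωB n).drop k) = x :=
  typeB_w0J_suffixes_general n hM cs
end

section
/- Let G be a semisimple complex algebraic group with Borel subgroup B and Weyl group W. The complete flag manifold G/B has effective good divisibility up to degree s if and only if for every two elements u, v ∈ W with ℓ(v) + (ℓ(w_0) − ℓ(u)) = s one has v ≤ u in Bruhat order. -/
open MDSC

variable {B W : Type*}

/-!
Effective classes are the nonnegative integer combinations of Schubert cycles, so by linear
independence two effective classes can only add up to zero if both vanish. Peeling one Schubert
cycle off each of two nonzero effective classes `x`, `y` writes `x * y` as `[X a] * [X b]` plus an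
effective class of the same codimension; hence good divisibility in degree `s` only has to be tested
on products of two Schubert cycles. Writing the second one as an opposite Schubert cycle
`[X (w₀ v)]`, the pairing criterion turns this into the Bruhat condition; beyond `dim G/B` both
sides fail, the product for reasons of degree and the Bruhat relation for reasons of length.
-/

namespace AddSubmonoid

theorem exists_add_of_mem_closure_of_ne_zero {M : Type*} [AddCommMonoid M] {S : Set M} {x : M}
    (hx : x ∈ closure S) (hx0 : x ≠ 0) : ∃ a ∈ S, ∃ r ∈ closure S, x = a + r := by
  induction hx using closure_induction with
  | mem a ha => exact ⟨a, ha, 0, zero_mem _, (add_zero a).symm⟩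
  | zero => exact absurd rfl hx0
  | add y z _ hz ihy ihz =>
    by_cases hy0 : y = 0
    · subst hy0
      rw [zero_add] at hx0 ⊢
      exact ihz hx0
    · obtain ⟨a, ha, r, hr, rfl⟩ := ihy hy0
      exact ⟨a, ha, r + z, add_mem hr hz, add_assoc a r z⟩

end AddSubmonoid

theorem LinearIndependent.eq_zero_of_add_eq_zero_of_mem_closure {ι A : Type*} [AddCommGroup A]
    {X : ι → A} (hX : LinearIndependent ℤ X) {a b : A}
    (ha : a ∈ AddSubmonoid.closure (Set.range X)) (hb : b ∈ AddSubmonoid.closure (Set.range X))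
    (hab : a + b = 0) : a = 0 := by
  have hXnat : LinearIndependent ℕ X := hX.restrict_scalars' ℕ
  rw [← Submodule.span_nat_eq_addSubmonoidClosure, Submodule.mem_toAddSubmonoid,
    ← Finsupp.range_linearCombination] at ha hb
  obtain ⟨f, rfl⟩ := ha
  obtain ⟨g, rfl⟩ := hb
  rw [← map_add, ← map_zero (Finsupp.linearCombination ℕ X)] at hab
  rw [(add_eq_zero.mp (hXnat hab)).1, map_zero]

section GradedCone

variable {ι A : Type*} [CommRing A]

def gradedCone (X : ι → A) (deg : ι → ℕ) (c : ℕ) : AddSubmonoid A :=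
  AddSubmonoid.closure (X '' {i | deg i = c})

variable {X : ι → A} {deg : ι → ℕ}

theorem mem_gradedCone_iff {c : ℕ} {x : A} :
    x ∈ gradedCone X deg c ↔
      ∃ f : ι →₀ ℕ, (∀ i ∈ f.support, deg i = c) ∧
        x = f.sum fun i m => (m : A) * X i := by
  rw [gradedCone, ← Submodule.span_nat_eq_addSubmonoidClosure, Submodule.mem_toAddSubmonoid,
    Finsupp.mem_span_image_iff_linearCombination]
  simp [Finsupp.mem_supported, Finsupp.linearCombination_apply, Set.subset_def, eq_comm]

theorem mem_gradedCone_self (i : ι) : X i ∈ gradedCone X deg (deg i) :=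
  AddSubmonoid.subset_closure ⟨i, rfl, rfl⟩

theorem gradedCone_eq_bot {c : ℕ} (hc : ∀ i, deg i ≠ c) : gradedCone X deg c = ⊥ := by
  have hempty : {i | deg i = c} = ∅ := Set.eq_empty_of_forall_notMem hc
  rw [gradedCone, hempty, Set.image_empty, AddSubmonoid.closure_empty]

theorem effGoodDivUpTo_gradedCone_iff (hX : LinearIndependent ℤ X)
    (hmul : ∀ (i j : ℕ) (x y : A), x ∈ gradedCone X deg i → y ∈ gradedCone X deg j →
      x * y ∈ gradedCone X deg (i + j)) (s : ℕ) :
    EffGoodDivUpTo (fun c => (gradedCone X deg c : Set A)) s ↔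
      ∀ a b, deg a + deg b = s → X a * X b ≠ 0 := by
  constructor
  · rintro hdiv a b rfl hab
    rcases hdiv _ _ _ _ rfl (mem_gradedCone_self a) (mem_gradedCone_self b) hab with h | h <;>
      exact hX.ne_zero _ h
  · rintro hprod i j x y rfl hx hy hxy
    by_contra! hxy0
    obtain ⟨_, ⟨a, rfl, rfl⟩, r, hr, rfl⟩ :=
      AddSubmonoid.exists_add_of_mem_closure_of_ne_zero hx hxy0.1
    obtain ⟨_, ⟨b, rfl, rfl⟩, r', hr', rfl⟩ :=
      AddSubmonoid.exists_add_of_mem_closure_of_ne_zero hy hxy0.2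
    have hrest : X a * r' + r * (X b + r') ∈ gradedCone X deg (deg a + deg b) :=
      add_mem (hmul _ _ _ _ (mem_gradedCone_self a) hr') (hmul _ _ _ _ hr hy)
    have hcone : gradedCone X deg (deg a + deg b) ≤ AddSubmonoid.closure (Set.range X) :=
      AddSubmonoid.closure_mono (Set.image_subset_range _ _)
    refine hprod a b rfl (hX.eq_zero_of_add_eq_zero_of_mem_closure
      (hcone (hmul _ _ _ _ (mem_gradedCone_self a) (mem_gradedCone_self b))) (hcone hrest) ?_)
    rw [← hxy]
    ring

end GradedCone

namespace MDSC

variable [Group W] {M : CoxeterMatrix B}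

theorem BruhatLE.length_le {cs : CoxeterSystem M W} {v u : W} (h : BruhatLE cs v u) :
    cs.length v ≤ cs.length u := by
  obtain ⟨ω, hω, rfl, ω', hω', hred', rfl⟩ := h
  rw [hω, hred']
  exact hω'.length_le

theorem isLongestElement_of_length_mul_eq_sub (cs : CoxeterSystem M W) {w0 : W}
    (hlen0 : ∀ v : W, cs.length (w0 * v) = cs.length w0 - cs.length v) :
    IsLongestElement cs w0 := by
  intro v
  by_contra! hv
  have : w0 * v = 1 := cs.length_eq_zero_iff.mp (by rw [hlen0]; omega)
  rw [eq_inv_of_mul_eq_one_right this, cs.length_inv] at hv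
  exact hv.false

end MDSC

theorem flag_effGoodDivUpTo_iff_bruhat_general [Group W] {M : CoxeterMatrix B}
    (cs : CoxeterSystem M W) (w0 : W)
    {A : Type*} [CommRing A] (Eff : ℕ → Set A) (X : W → A)
    -- (1), (2): Schubert cycles `X w` (of codimension `ℓ(w₀) - ℓ(w)`) form a basis, and the
    -- effective classes of codimension `c` are exactly the nonnegative combinations of
    -- Schubert cycles of codimension `c`:
    (heff : ∀ (c : ℕ) (x : A), x ∈ Eff c ↔ ∃ f : W →₀ ℕ,
      (∀ w ∈ f.support, cs.length w0 - cs.length w = c) ∧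
      x = f.sum fun w m => (m : A) * X w)
    (hind : LinearIndependent ℤ X)
    -- (3): products of effective classes are effective (nonnegativity of the
    -- Littlewood--Richardson coefficients):
    (hmul : ∀ (i j : ℕ) (x y : A), x ∈ Eff i → y ∈ Eff j → x * y ∈ Eff (i + j))
    -- the opposite Schubert cycle `[Xᵒᵖ v] = [X (w₀ v)]` has codimension `ℓ v`:
    (hlen0 : ∀ v : W, cs.length (w0 * v) = cs.length w0 - cs.length v)
    -- (4): for `ℓ(v) + c(u) ≤ dim G/B`, `[X u] · [Xᵒᵖ v] ≠ 0 ↔ v ≤ u` in Bruhat order: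
    (hpair : ∀ u v : W, cs.length v + (cs.length w0 - cs.length u) ≤ cs.length w0 →
      (X u * X (w0 * v) ≠ 0 ↔ BruhatLE cs v u))
    (s : ℕ) :
    EffGoodDivUpTo Eff s ↔
      ∀ u v : W, cs.length v + (cs.length w0 - cs.length u) = s → BruhatLE cs v u := by
  obtain rfl : Eff = fun c => (gradedCone X (fun w => cs.length w0 - cs.length w) c : Set A) :=
    funext fun c => Set.ext fun x => (heff c x).trans mem_gradedCone_iff.symm
  have hlong := isLongestElement_of_length_mul_eq_sub cs hlen0
  have hcodim_opp : ∀ v, cs.length w0 - cs.length (w0 * v) = cs.length v := fun v => by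
    have := hlen0 v
    have := hlong v
    omega
  have hpair' : ∀ u v, X u * X (w0 * v) ≠ 0 ↔ BruhatLE cs v u := fun u v => by
    by_cases hs : cs.length v + (cs.length w0 - cs.length u) ≤ cs.length w0
    · exact hpair u v hs
    refine iff_of_false (not_not.mpr ?_) fun h => hs <| by
      have := h.length_le
      have := hlong u
      omega
    have hvanish := gradedCone_eq_bot (X := X) (deg := fun w => cs.length w0 - cs.length w)
      (c := cs.length w0 - cs.length u + (cs.length w0 - cs.length (w0 * v)))
      fun w => by rw [hcodim_opp]; omega
    simpa [hvanish] using hmul _ _ _ _ (mem_gradedCone_self u) (mem_gradedCone_self (w0 * v))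
  rw [effGoodDivUpTo_gradedCone_iff hind hmul]
  refine ⟨fun h u v hs => (hpair' u v).mp (h u _ (by rw [hcodim_opp]; omega)),
    fun h u b hs => ?_⟩
  rw [← mul_inv_cancel_left w0 b, hpair']
  exact h u _ (by rw [← hcodim_opp, mul_inv_cancel_left]; omega)

/-- the complete flag manifold `G/B` (modelled by its Chow ring `A`, with
Schubert basis `X w` indexed by the Weyl group, satisfying the standard facts (1)-(4)) has
effective good divisibility up to degree `s` iff for all `u, v ∈ W` with
`ℓ(v) + (ℓ(w₀) - ℓ(u)) = s` one has `v ≤ u` in Bruhat order. -/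
theorem flag_effGoodDivUpTo_iff_bruhat [Group W] {M : CoxeterMatrix B}
    (cs : CoxeterSystem M W) (w0 : W) (hw0 : IsLongestElement cs w0)
    {A : Type*} [CommRing A] (Eff : ℕ → Set A) (X : W → A)
    -- (1), (2): Schubert cycles `X w` (of codimension `ℓ(w₀) - ℓ(w)`) form a basis, and the
    -- effective classes of codimension `c` are exactly the nonnegative combinations of
    -- Schubert cycles of codimension `c`:
    (heff : ∀ (c : ℕ) (x : A), x ∈ Eff c ↔ ∃ f : W →₀ ℕ,
      (∀ w ∈ f.support, cs.length w0 - cs.length w = c) ∧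
      x = f.sum fun w m => (m : A) * X w)
    (hne : ∀ w : W, X w ≠ 0)
    (hind : LinearIndependent ℤ X)
    -- (3): products of effective classes are effective (nonnegativity of the
    -- Littlewood--Richardson coefficients):
    (hmul : ∀ (i j : ℕ) (x y : A), x ∈ Eff i → y ∈ Eff j → x * y ∈ Eff (i + j))
    -- the opposite Schubert cycle `[Xᵒᵖ v] = [X (w₀ v)]` has codimension `ℓ v`:
    (hlen0 : ∀ v : W, cs.length (w0 * v) = cs.length w0 - cs.length v)
    -- (4): for `ℓ(v) + c(u) ≤ dim G/B`, `[X u] · [Xᵒᵖ v] ≠ 0 ↔ v ≤ u` in Bruhat order: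
    (hpair : ∀ u v : W, cs.length v + (cs.length w0 - cs.length u) ≤ cs.length w0 →
      (X u * X (w0 * v) ≠ 0 ↔ BruhatLE cs v u))
    (s : ℕ) :
    EffGoodDivUpTo Eff s ↔
      ∀ u v : W, cs.length v + (cs.length w0 - cs.length u) = s → BruhatLE cs v u :=
  flag_effGoodDivUpTo_iff_bruhat_general cs w0 Eff X heff hind hmul hlen0 hpair s
end

section
/- In a Coxeter group W with Bruhat order ≤, if v = v^J v_J and u = u^J u_J are parabolic decompositions with respect to a subset J of simple reflections, and v^J ≤ u^J in Bruhat order and v_J ≤ u_J in Bruhat order, then v ≤ u. -/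
open MDSC

variable {B W : Type*}

/-! Concatenate reduced words for the two parts of `u`, and inside them the subwords for the two
parts of `v`. Additivity of length is exactly what makes both concatenations reduced, so the
subword criterion for the Bruhat order applies. -/

section

variable [Group W] {M : CoxeterMatrix B} {cs : CoxeterSystem M W}

theorem CoxeterSystem.IsReduced.append {ω ω' : List B} (hω : cs.IsReduced ω)
    (hω' : cs.IsReduced ω')
    (hlen : cs.length (cs.wordProd ω * cs.wordProd ω') =
      cs.length (cs.wordProd ω) + cs.length (cs.wordProd ω')) :
    cs.IsReduced (ω ++ ω') := by
  rw [CoxeterSystem.IsReduced, cs.wordProd_append, hlen, hω.eq, hω'.eq, List.length_append]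

theorem MDSC.BruhatLE.mul_of_length_mul_eq {a b x y : W} (hax : BruhatLE cs a x)
    (hby : BruhatLE cs b y) (hxy : cs.length (x * y) = cs.length x + cs.length y)
    (hab : cs.length (a * b) = cs.length a + cs.length b) :
    BruhatLE cs (a * b) (x * y) := by
  obtain ⟨ω, hω, rfl, α, hαω, hα, rfl⟩ := hax
  obtain ⟨ω', hω', rfl, β, hβω', hβ, rfl⟩ := hby
  exact ⟨ω ++ ω', hω.append hω' hxy, cs.wordProd_append ω ω',
    α ++ β, hαω.append hβω', hα.append hβ hab, cs.wordProd_append α β⟩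

end

theorem bruhat_le_of_parabolic_parts_general [Group W] {M : CoxeterMatrix B}
    (cs : CoxeterSystem M W)
    (v u vJup vJlo uJup uJlo : W)
    (hv : v = vJup * vJlo)
    (hvadd : cs.length v = cs.length vJup + cs.length vJlo)
    (hu : u = uJup * uJlo)
    (huadd : cs.length u = cs.length uJup + cs.length uJlo)
    (h1 : BruhatLE cs vJup uJup) (h2 : BruhatLE cs vJlo uJlo) :
    BruhatLE cs v u := by
  subst hv hu
  exact h1.mul_of_length_mul_eq h2 huadd hvadd

/-- if `v = v^J v_J` and `u = u^J u_J` are parabolic decompositions with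
`v^J ≤ u^J` and `v_J ≤ u_J` in Bruhat order, then `v ≤ u`. -/
theorem bruhat_le_of_parabolic_parts [Group W] {M : CoxeterMatrix B}
    (cs : CoxeterSystem M W) (J : Set B)
    (v u vJup vJlo uJup uJlo : W)
    (hv : v = vJup * vJlo) (hvu : vJup ∈ MinCosetReps cs J)
    (hvl : vJlo ∈ ParabolicSubgroup cs J)
    (hvadd : cs.length v = cs.length vJup + cs.length vJlo)
    (hu : u = uJup * uJlo) (huu : uJup ∈ MinCosetReps cs J)
    (hul : uJlo ∈ ParabolicSubgroup cs J)
    (huadd : cs.length u = cs.length uJup + cs.length uJlo)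
    (h1 : BruhatLE cs vJup uJup) (h2 : BruhatLE cs vJlo uJlo) :
    BruhatLE cs v u :=
  bruhat_le_of_parabolic_parts_general cs v u vJup vJlo uJup uJlo hv hvadd hu huadd h1 h2
end
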